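/- Let T be a tree with n ≥ 3 vertices such that no pendant vertex of T is adjacent to a vertex of degree b for any b ≥ 4 (i.e., m_{1,b}(T) = 0 for all b ≥ 4), and such that Δ − δ₁ ≤ (2δ₁ − 1)², where Δ is the maximum degree of T and δ₁ is the minimum degree among its non-pendant vertices. Then GA(T) > ABC(T). -/

import Mathlib

open SimpleGraph

/-- The first geometric-arithmetic index of a finite simple graph:
`GA(G) = Σ_{uv ∈ E(G)} 2√(dᵤ dᵥ)/(dᵤ + dᵥ)`. -/
noncomputable def GA {V : Type*} [Finite V] (G : SimpleGraph V) : ℝ := by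
  classical
  have : Fintype V := Fintype.ofFinite V
  exact ∑ e ∈ G.edgeFinset,
    Sym2.lift ⟨fun u v =>
      2 * Real.sqrt ((G.degree u : ℝ) * (G.degree v : ℝ)) /
        ((G.degree u : ℝ) + (G.degree v : ℝ)),
      fun u v => by
        dsimp only; rw [mul_comm ((G.degree u : ℝ)), add_comm ((G.degree u : ℝ))]⟩ e

/-- The atom-bond connectivity index of a finite simple graph:
`ABC(G) = Σ_{uv ∈ E(G)} √((dᵤ + dᵥ - 2)/(dᵤ dᵥ))`. -/
noncomputable def ABC {V : Type*} [Finite V] (G : SimpleGraph V) : ℝ := by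
  classical
  have : Fintype V := Fintype.ofFinite V
  exact ∑ e ∈ G.edgeFinset,
    Sym2.lift ⟨fun u v =>
      Real.sqrt (((G.degree u : ℝ) + (G.degree v : ℝ) - 2) /
        ((G.degree u : ℝ) * (G.degree v : ℝ))),
      fun u v => by
        dsimp only; rw [mul_comm ((G.degree u : ℝ)), add_comm ((G.degree u : ℝ))]⟩ e

/-- The degree of a vertex (classical wrapper around `SimpleGraph.degree`). -/
noncomputable def deg {V : Type*} [Finite V] (G : SimpleGraph V) (v : V) : ℕ := by
  classical
  have : Fintype V := Fintype.ofFinite V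
  exact G.degree v

/-- The maximum degree `Δ` of a finite simple graph. -/
noncomputable def maxDeg {V : Type*} [Finite V] (G : SimpleGraph V) : ℕ := by
  classical
  have : Fintype V := Fintype.ofFinite V
  exact G.maxDegree

/-- The minimum degree `δ` of a finite simple graph. -/
noncomputable def minDeg {V : Type*} [Finite V] (G : SimpleGraph V) : ℕ := by
  classical
  have : Fintype V := Fintype.ofFinite V
  exact G.minDegree

/-- The minimum degree `δ₁` among the non-pendant vertices of a graph. -/
noncomputable def minNonPendantDeg {V : Type*} [Finite V] (G : SimpleGraph V) : ℕ :=
  sInf {d : ℕ | ∃ v : V, deg G v ≠ 1 ∧ deg G v = d}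

/-!
Both indices are sums over edges, so it suffices to compare the summands: for an edge joining
degrees `a` and `b`, squaring shows `√((a+b-2)/(ab)) < 2√(ab)/(a+b)` iff
`(a+b)²(a+b-2) < 4a²b²`. A pendant edge cannot end in another pendant vertex (that edge would be a
whole component), so by hypothesis its degrees are `(1,2)` or `(1,3)`, where the inequality is
checked directly. Any other edge joins degrees `δ₁ ≤ a ≤ b ≤ Δ`, hence `b - a ≤ Δ - δ₁ ≤ (2a-1)²`,
and this gap bound is exactly what makes the polynomial inequality hold.
-/

theorem abc_term_lt_ga_term {a b : ℝ} (ha : 0 < a) (hb : 0 < b)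
    (h : (a + b) ^ 2 * (a + b - 2) < 4 * (a * b) ^ 2) :
    √((a + b - 2) / (a * b)) < 2 * √(a * b) / (a + b) := by
  have hab : 0 < a * b := mul_pos ha hb
  have hs : 0 < a + b := add_pos ha hb
  rw [Real.sqrt_lt' (by positivity), div_pow, mul_pow, Real.sq_sqrt hab.le,
    div_lt_div_iff₀ hab (by positivity)]
  linarith

theorem sq_add_mul_sub_two_lt_of_le {a b : ℝ} (ha : 1 ≤ a) (hab : a ≤ b)
    (h : b - a ≤ (2 * a - 1) ^ 2) :
    (a + b) ^ 2 * (a + b - 2) < 4 * (a * b) ^ 2 := by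
  obtain ⟨t, ht, rfl⟩ : ∃ t, 0 ≤ t ∧ b = a + t := ⟨b - a, by linarith, by ring⟩
  have ht' : t ≤ (2 * a - 1) ^ 2 := by linarith
  -- The difference is `4a²(a²-2a+2) + t(8a³-12a²+8a) + t²(4a²-6a+2) - t³`; the bounds
  -- `t³ ≤ t²(2a-1)²` and `t²(2a-1) ≤ t(2a-1)³` reduce it to at least `4a²(a²-2a+2) + t(2a+1)`.
  nlinarith [mul_le_mul_of_nonneg_left ht' (mul_self_nonneg t),
    mul_le_mul_of_nonneg_left (mul_le_mul_of_nonneg_left ht' ht) (by linarith : (0:ℝ) ≤ 2 * a - 1),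
    mul_nonneg ht (by linarith : (0:ℝ) ≤ 2 * a + 1),
    mul_pos (pow_pos (by linarith : (0:ℝ) < a) 2) (by nlinarith : (0:ℝ) < a ^ 2 - 2 * a + 2)]

theorem sq_add_mul_sub_two_lt_of_mem_Icc {m M a b : ℕ} (hmM : M - m ≤ (2 * m - 1) ^ 2)
    (ha : a ∈ Set.Icc m M) (hb : b ∈ Set.Icc m M) (ha₀ : 0 < a) (hb₀ : 0 < b) :
    (a + b : ℝ) ^ 2 * (a + b - 2) < 4 * (a * b) ^ 2 := by
  wlog hab : a ≤ b generalizing a b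
  · simpa [add_comm, mul_comm] using this hb ha hb₀ ha₀ (by omega)
  obtain ⟨hma, haM⟩ := ha
  obtain ⟨hmb, hbM⟩ := hb
  have hgap : b - a ≤ (2 * a - 1) ^ 2 :=
    le_trans (by omega) (hmM.trans (Nat.pow_le_pow_left (by omega) 2))
  apply sq_add_mul_sub_two_lt_of_le (by exact_mod_cast ha₀) (by exact_mod_cast hab)
  simpa [Nat.cast_sub hab, Nat.cast_sub (show 1 ≤ 2 * a by omega)] using
    (Nat.cast_le (α := ℝ)).mpr hgap

section Degrees

variable {V : Type*} [Finite V] (G : SimpleGraph V)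

theorem deg_eq_degree (v : V) [Fintype (G.neighborSet v)] : deg G v = G.degree v := by
  unfold deg
  congr!

theorem deg_le_maxDeg (v : V) : deg G v ≤ maxDeg G := by
  classical
  have : Fintype V := Fintype.ofFinite V
  rw [deg_eq_degree, maxDeg]
  convert G.degree_le_maxDegree v

theorem minNonPendantDeg_le {v : V} (hv : deg G v ≠ 1) : minNonPendantDeg G ≤ deg G v :=
  Nat.sInf_le ⟨v, hv, rfl⟩

theorem one_le_deg_of_adj {u v : V} (h : G.Adj u v) : 1 ≤ deg G u := by
  classical
  have : Fintype V := Fintype.ofFinite V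
  rw [deg_eq_degree]
  exact (G.degree_pos_iff_exists_adj u).mpr ⟨v, h⟩

theorem eq_of_adj_of_deg_eq_one {u v w : V} (hu : deg G u = 1) (hv : G.Adj u v)
    (hw : G.Adj u w) : w = v := by
  classical
  have : Fintype V := Fintype.ofFinite V
  rw [deg_eq_degree, degree_eq_one_iff_existsUnique_adj] at hu
  exact hu.unique hw hv

theorem ABC_lt_GA_of_forall_adj (hG : G ≠ ⊥)
    (h : ∀ u v, G.Adj u v →
      (deg G u + deg G v : ℝ) ^ 2 * (deg G u + deg G v - 2) < 4 * (deg G u * deg G v) ^ 2) :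
    ABC G < GA G := by
  classical
  -- `GA` and `ABC` are defined with this very instance, so the sums unfold to matching terms.
  let _ : Fintype V := Fintype.ofFinite V
  unfold ABC GA
  dsimp only
  apply Finset.sum_lt_sum_of_nonempty (edgeFinset_nonempty.mpr hG)
  intro e he
  induction e using Sym2.ind with
  | _ u v =>
    have huv : G.Adj u v := by simpa using he
    exact abc_term_lt_ga_term (by exact_mod_cast one_le_deg_of_adj G huv)
      (by exact_mod_cast one_le_deg_of_adj G huv.symm) (h u v huv)

theorem SimpleGraph.Connected.not_adj_of_deg_eq_one {G : SimpleGraph V} (hG : G.Connected)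
    (hcard : 3 ≤ Nat.card V) {u v : V} (hu : deg G u = 1) (hv : deg G v = 1) : ¬G.Adj u v := by
  classical
  let _ : Fintype V := Fintype.ofFinite V
  intro huv
  obtain ⟨w, -, hw⟩ := Finset.exists_mem_notMem_of_card_lt_card (s := {u, v}) (t := Finset.univ)
    (Finset.card_le_two.trans_lt (by rwa [Finset.card_univ, ← Nat.card_eq_fintype_card]))
  obtain ⟨d, -, hd, hd'⟩ :=
    (hG.preconnected u w).some.exists_boundary_dart {u, v} (by simp) (by simpa using hw)
  rcases hd with hd | hd
  · exact hd' (Or.inr (eq_of_adj_of_deg_eq_one G hu huv (hd ▸ d.adj)))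
  · exact hd' (Or.inl (eq_of_adj_of_deg_eq_one G hv huv.symm (hd ▸ d.adj)))

end Degrees

/-- Let `T` be a tree with `n ≥ 3` vertices in which no pendant vertex is
adjacent to a vertex of degree `b` for any `b ≥ 4`, and with `Δ − δ₁ ≤ (2δ₁ − 1)²`, where
`δ₁` is the minimum non-pendant vertex degree. Then `GA(T) > ABC(T)`. -/
theorem stmt_10 {V : Type*} [Fintype V] (T : SimpleGraph V)
    (hT : T.IsTree) (hn : 3 ≤ Fintype.card V)
    (hpend : ∀ u v : V, T.Adj u v → deg T u = 1 → ∀ b : ℕ, 4 ≤ b → deg T v ≠ b)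
    (hdeg : maxDeg T - minNonPendantDeg T ≤ (2 * minNonPendantDeg T - 1)^2) :
    ABC T < GA T := by
  have hconn : T.Connected := hT.connected
  rw [← Nat.card_eq_fintype_card] at hn
  have : Nontrivial V := Finite.one_lt_card_iff_nontrivial.mp (by omega)
  refine ABC_lt_GA_of_forall_adj T (fun h => not_connected_bot (h ▸ hconn)) fun u v huv => ?_
  have pendant_edge {u v : V} (huv : T.Adj u v) (hu : deg T u = 1) :
      deg T v = 2 ∨ deg T v = 3 := by
    have hv₀ := one_le_deg_of_adj T huv.symm
    have hv₁ : deg T v ≠ 1 := fun hv => hconn.not_adj_of_deg_eq_one hn hu hv huv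
    have hv₄ : deg T v < 4 := not_le.mp fun h4 => hpend u v huv hu _ h4 rfl
    omega
  by_cases hu : deg T u = 1
  · rcases pendant_edge huv hu with hv | hv <;> rw [hu, hv] <;> norm_num
  by_cases hv : deg T v = 1
  · rcases pendant_edge huv.symm hv with hu' | hu' <;> rw [hv, hu'] <;> norm_num
  exact sq_add_mul_sub_two_lt_of_mem_Icc hdeg ⟨minNonPendantDeg_le T hu, deg_le_maxDeg T u⟩
    ⟨minNonPendantDeg_le T hv, deg_le_maxDeg T v⟩ (one_le_deg_of_adj T huv)
    (one_le_deg_of_adj T huv.symm)
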